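/- Let ρ be a pure n-partite state on ℂ^{d₁} ⊗ ⋯ ⊗ ℂ^{dₙ} with n > 2. For each single index l, the purity identity (1/d_l)(1 + ‖T^{(l)}‖²) = (1/(D/d_l)) (1 + ∑_{s=1}^{n-1} (sum of ‖T^{(J)}‖² over subsets J of {1,…,n}\{l} of size s)) holds, where D = d₁⋯dₙ. Summing over l yields ∑_{l=1}^n (1/d_l²)(1 + ‖T^{(l)}‖²) = (1/D)(n + (n−1)A₁ + (n−2)A₂ + ⋯ + A_{n−1}), with Aₛ the sum of squared norms of all s-body correlation tensors. -/

import Mathlib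

open Matrix
open Finset
open scoped ComplexConjugate

/-- The Weyl operator `A_{ij} = ∑_{m ∈ ℤ_d} ω^{im} E_{m, m+j}` on `ℂ^d`. -/
noncomputable def Weyl (d : ℕ) [NeZero d] (ω : ℂ) (i j : ZMod d) :
    Matrix (ZMod d) (ZMod d) ℂ :=
  ∑ m : ZMod d, (ω ^ (i * m).val) • Matrix.single m (m + j) (1 : ℂ)

lemma weyl_apply(d : ℕ) [NeZero d] (ω : ℂ) (p q x y : ZMod d) :
    Weyl d ω p q x y = if y = x + q then ω ^ (p * x).val else 0 := by
  unfold Weyl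
  simp only [Matrix.sum_apply, Matrix.smul_apply, Matrix.single, Matrix.of_apply,
    smul_eq_mul, mul_ite, mul_one, mul_zero]
  rw [Finset.sum_eq_single x]
  · by_cases h : y = x + q
    · simp [h]
    · rw [if_neg, if_neg h]
      rintro ⟨-, hh⟩; exact h hh.symm
  · intro m _ hm
    rw [if_neg]; rintro ⟨hh, -⟩; exact hm hh
  · simp

/-- Tensor product of Weyl operators on `ℂ^{d₁} ⊗ ⋯ ⊗ ℂ^{dₙ}`, one factor per
party (the index `(0,0)` gives the identity on that factor). -/
noncomputable def WeylT (n : ℕ) (d : Fin n → ℕ) [∀ i, NeZero (d i)] (ω : Fin n → ℂ)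
    (a : ∀ i, ZMod (d i) × ZMod (d i)) :
    Matrix (∀ i, ZMod (d i)) (∀ i, ZMod (d i)) ℂ :=
  Matrix.of fun x y => ∏ i, (Weyl (d i) (ω i) (a i).1 (a i).2) (x i) (y i)

/-- Correlation coefficient of an `n`-partite state at a Weyl multi-index. -/
noncomputable def corrN (n : ℕ) (d : Fin n → ℕ) [∀ i, NeZero (d i)] (ω : Fin n → ℂ)
    (ρ : Matrix (∀ i, ZMod (d i)) (∀ i, ZMod (d i)) ℂ)
    (a : ∀ i, ZMod (d i) × ZMod (d i)) : ℂ :=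
  Matrix.trace (ρ * (WeylT n d ω a)ᴴ)

lemma pow_mod_eq {ω : ℂ} {m : ℕ} (h1 : ω ^ m = 1) (k : ℕ) : ω ^ (k % m) = ω ^ k := by
  conv_rhs => rw [← Nat.div_add_mod k m, pow_add, pow_mul, h1, one_pow, one_mul]

lemma pow_val_add {m : ℕ} [NeZero m] {ω : ℂ} (h1 : ω ^ m = 1) (w₁ w₂ : ZMod m) :
    ω ^ (w₁ + w₂).val = ω ^ w₁.val * ω ^ w₂.val := by
  rw [ZMod.val_add, pow_mod_eq h1, pow_add]

lemma conj_pow_val {m : ℕ} [NeZero m] {ω : ℂ} (hω : IsPrimitiveRoot ω m) (w : ZMod m) :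
    conj (ω ^ w.val) = ω ^ (-w).val := by
  have h1 : ω ^ m = 1 := hω.pow_eq_one
  have hn : ‖ω ^ w.val‖ = 1 := by
    rw [norm_pow, Complex.norm_eq_one_of_pow_eq_one h1 (NeZero.ne m), one_pow]
  rw [← Complex.inv_eq_conj hn]
  exact inv_eq_of_mul_eq_one_right
    (by rw [← pow_val_add h1, add_neg_cancel, ZMod.val_zero, pow_zero])

lemma sum_zmod_val {m : ℕ} [NeZero m] (f : ℕ → ℂ) :
    ∑ b : ZMod m, f b.val = ∑ k ∈ Finset.range m, f k := by
  refine Finset.sum_nbij' (fun b => b.val) (fun k => (k : ZMod m)) ?_ ?_ ?_ ?_ ?_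
  · intro b _; exact Finset.mem_range.mpr (ZMod.val_lt b)
  · intro k _; exact Finset.mem_univ _
  · intro b _; simp [ZMod.natCast_val, ZMod.cast_id]
  · intro k hk; exact ZMod.val_cast_of_lt (Finset.mem_range.mp hk)
  · intro b _; rfl

lemma sum_pow_val {m : ℕ} [NeZero m] {ω : ℂ} (hω : IsPrimitiveRoot ω m) (w : ZMod m) :
    ∑ b : ZMod m, ω ^ (b * w).val = if w = 0 then (m : ℂ) else 0 := by
  have h1 : ω ^ m = 1 := hω.pow_eq_one
  by_cases hw : w = 0
  · simp [hw, Finset.card_univ]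
  · rw [if_neg hw]
    have key : ∀ b : ZMod m, ω ^ (b * w).val = (ω ^ w.val) ^ b.val := by
      intro b
      rw [← pow_mul, mul_comm w.val, ZMod.val_mul, pow_mod_eq h1]
    simp only [key]
    rw [sum_zmod_val (fun k => (ω ^ w.val) ^ k)]
    have hne : ω ^ w.val ≠ 1 := by
      apply hω.pow_ne_one_of_pos_of_lt
      · exact fun h => hw ((ZMod.val_eq_zero w).mp h)
      · exact ZMod.val_lt w
    have hm1 : (ω ^ w.val) ^ m = 1 := by
      rw [← pow_mul, mul_comm, pow_mul, h1, one_pow]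
    rw [geom_sum_eq hne, hm1, sub_self, zero_div]

lemma orth1 {m : ℕ} [NeZero m] {ω : ℂ} (hω : IsPrimitiveRoot ω m) (u v : ZMod m) :
    ∑ b : ZMod m, conj (ω ^ (b * u).val) * ω ^ (b * v).val = if u = v then (m : ℂ) else 0 := by
  have h1 : ω ^ m = 1 := hω.pow_eq_one
  have : ∀ b : ZMod m, conj (ω ^ (b * u).val) * ω ^ (b * v).val = ω ^ (b * (v - u)).val := by
    intro b
    rw [conj_pow_val hω, ← pow_val_add h1]
    congr 1
    ring_nf
  simp only [this]
  rw [sum_pow_val hω]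
  simp only [sub_eq_zero]
  by_cases h : u = v <;> simp [h, eq_comm]

section aux
variable {n : ℕ} {d : Fin n → ℕ} [∀ i, NeZero (d i)] {ω : Fin n → ℂ}

lemma weylT_apply (a : ∀ i, ZMod (d i) × ZMod (d i)) (x y : ∀ i, ZMod (d i)) :
    WeylT n d ω a x y =
      if y = (fun i => x i + (a i).2) then ∏ i, (ω i) ^ ((a i).1 * x i).val else 0 := by
  unfold WeylT
  by_cases h : y = fun i => x i + (a i).2
  · rw [if_pos h, Matrix.of_apply]
    apply Finset.prod_congr rfl
    intro i _
    rw [weyl_apply, if_pos]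
    exact congrFun h i
  · rw [if_neg h, Matrix.of_apply]
    have : ∃ i, y i ≠ x i + (a i).2 := by
      by_contra hc; push_neg at hc; exact h (funext hc)
    obtain ⟨i, hi⟩ := this
    apply Finset.prod_eq_zero (Finset.mem_univ i)
    rw [weyl_apply, if_neg hi]

lemma corr_eq (ψ : (∀ i, ZMod (d i)) → ℂ) (a : ∀ i, ZMod (d i) × ZMod (d i)) :
    corrN n d ω (Matrix.vecMulVec ψ (star ψ)) a =
      ∑ x, ψ x * conj (ψ (fun i => x i + (a i).2)) *
        conj (∏ i, (ω i) ^ ((a i).1 * x i).val) := by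
  unfold corrN
  rw [Matrix.trace]
  simp only [Matrix.diag_apply, Matrix.mul_apply, Matrix.conjTranspose_apply,
    Matrix.vecMulVec_apply, Pi.star_apply, RCLike.star_def]
  apply Finset.sum_congr rfl
  intro x _
  rw [Finset.sum_eq_single (fun i => x i + (a i).2)]
  · rw [weylT_apply, if_pos rfl]
  · intro y _ hy
    rw [weylT_apply, if_neg hy, map_zero, mul_zero]
  · simp


variable {n : ℕ} {d : Fin n → ℕ} [∀ i, NeZero (d i)]

lemma filter_support_eq {B : Fin n → Type*} [∀ i, Fintype (B i)] [∀ i, DecidableEq (B i)]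
    [∀ i, Zero (B i)] (S : Finset (Fin n)) :
    Finset.univ.filter (fun a : ∀ i, B i => ∀ i ∉ S, a i = 0) =
      Fintype.piFinset (fun i => if i ∈ S then Finset.univ else {0}) := by
  ext a
  simp only [Finset.mem_filter, Finset.mem_univ, true_and, Fintype.mem_piFinset]
  refine forall_congr' fun i => ?_
  by_cases hi : i ∈ S <;> simp [hi]

lemma orthS {ω : Fin n → ℂ} (hω : ∀ i, IsPrimitiveRoot (ω i) (d i)) (S : Finset (Fin n))
    (x x' : ∀ i, ZMod (d i)) :
    ∑ p ∈ Finset.univ.filter (fun p : ∀ i, ZMod (d i) => ∀ i ∉ S, p i = 0),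
        ∏ i, (conj ((ω i) ^ ((p i * x i).val)) * (ω i) ^ ((p i * x' i).val)) =
      if ∀ i ∈ S, x i = x' i then ∏ i ∈ S, (d i : ℂ) else 0 := by
  rw [filter_support_eq,
    ← Finset.prod_univ_sum (fun i => if i ∈ S then (Finset.univ : Finset (ZMod (d i))) else {0})
      (fun i b => conj ((ω i) ^ ((b * x i).val)) * (ω i) ^ ((b * x' i).val))]
  have hfac : ∀ i, ∑ b ∈ (if i ∈ S then (Finset.univ : Finset (ZMod (d i))) else {0}),
      conj ((ω i) ^ ((b * x i).val)) * (ω i) ^ ((b * x' i).val) =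
      if i ∈ S then (if x i = x' i then (d i : ℂ) else 0) else 1 := by
    intro i
    by_cases hi : i ∈ S
    · rw [if_pos hi, if_pos hi, orth1 (hω i)]
    · rw [if_neg hi, if_neg hi, Finset.sum_singleton]
      simp
  rw [Finset.prod_congr rfl fun i _ => hfac i]
  rw [Finset.prod_ite_mem, Finset.univ_inter]
  by_cases h : ∀ i ∈ S, x i = x' i
  · rw [if_pos h]
    exact Finset.prod_congr rfl fun i hi => if_pos (h i hi)
  · rw [if_neg h]
    push_neg at h
    obtain ⟨i, hi, hne⟩ := h
    exact Finset.prod_eq_zero hi (if_neg hne)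

lemma sum_pair_split (S : Finset (Fin n)) (f : (∀ i, ZMod (d i) × ZMod (d i)) → ℂ) :
    ∑ a ∈ Finset.univ.filter (fun a : ∀ i, ZMod (d i) × ZMod (d i) => ∀ i ∉ S, a i = 0), f a =
      ∑ q ∈ Finset.univ.filter (fun q : ∀ i, ZMod (d i) => ∀ i ∉ S, q i = 0),
        ∑ p ∈ Finset.univ.filter (fun p : ∀ i, ZMod (d i) => ∀ i ∉ S, p i = 0),
          f (fun i => (p i, q i)) := by
  rw [← Finset.sum_product']
  refine Finset.sum_nbij' (fun a => (fun i => (a i).2, fun i => (a i).1))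
    (fun z => fun i => (z.2 i, z.1 i)) ?_ ?_ ?_ ?_ ?_
  · intro a ha
    simp only [Finset.mem_filter, Finset.mem_univ, true_and] at ha
    simp only [Finset.mem_product, Finset.mem_filter, Finset.mem_univ, true_and]
    exact ⟨fun i hi => by rw [ha i hi]; rfl, fun i hi => by rw [ha i hi]; rfl⟩
  · intro z hz
    simp only [Finset.mem_product, Finset.mem_filter, Finset.mem_univ, true_and] at hz
    simp only [Finset.mem_filter, Finset.mem_univ, true_and]
    intro i hi
    rw [Prod.ext_iff]
    exact ⟨hz.2 i hi, hz.1 i hi⟩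
  · intro a _; rfl
  · intro z _; rfl
  · intro a _; rfl

lemma sum_mix (S : Finset (Fin n)) (x : ∀ i, ZMod (d i))
    (F : (∀ i, ZMod (d i)) → (∀ i, ZMod (d i)) → ℂ) :
    ∑ q ∈ Finset.univ.filter (fun q : ∀ i, ZMod (d i) => ∀ i ∉ S, q i = 0),
      ∑ x' ∈ Finset.univ.filter (fun x' : ∀ i, ZMod (d i) => ∀ i ∈ S, x i = x' i), F q x' =
    ∑ y : ∀ i, ZMod (d i),
      F (fun i => if i ∈ S then y i - x i else 0) (fun i => if i ∈ S then x i else y i) := by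
  rw [← Finset.sum_product']
  refine Finset.sum_nbij' (fun z => fun i => if i ∈ S then x i + z.1 i else z.2 i)
    (fun y => (fun i => if i ∈ S then y i - x i else 0, fun i => if i ∈ S then x i else y i))
    ?_ ?_ ?_ ?_ ?_
  · intro z _; exact Finset.mem_univ _
  · intro y _
    simp only [Finset.mem_product, Finset.mem_filter, Finset.mem_univ, true_and]
    exact ⟨fun i hi => by rw [if_neg hi], fun i hi => by rw [if_pos hi]⟩
  · intro z hz
    simp only [Finset.mem_product, Finset.mem_filter, Finset.mem_univ, true_and] at hz
    ext i
    · by_cases hi : i ∈ S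
      · simp [hi]
      · simp [hi, (hz.1 i hi)]
    · by_cases hi : i ∈ S
      · simp [hi, ← hz.2 i hi]
      · simp [hi]
  · intro y _
    funext i
    by_cases hi : i ∈ S <;> simp [hi]
  · intro z hz
    simp only [Finset.mem_product, Finset.mem_filter, Finset.mem_univ, true_and] at hz
    congr 1
    · funext i
      by_cases hi : i ∈ S
      · simp [hi]
      · simp [hi, (hz.1 i hi)]
    · funext i
      by_cases hi : i ∈ S
      · simp [hi, hz.2 i hi]
      · simp [hi]


end aux

noncomputable def Qc (n : ℕ) (d : Fin n → ℕ) [∀ i, NeZero (d i)]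
    (ψ : (∀ i, ZMod (d i)) → ℂ) (S : Finset (Fin n)) : ℂ :=
  ∑ x, ∑ y, ψ x * conj (ψ (fun i => if i ∈ S then y i else x i)) *
    (conj (ψ (fun i => if i ∈ S then x i else y i)) * ψ y)

section aux2
variable {n : ℕ} {d : Fin n → ℕ} [∀ i, NeZero (d i)]

lemma Qc_compl (ψ : (∀ i, ZMod (d i)) → ℂ) (S : Finset (Fin n)) :
    Qc n d ψ Sᶜ = Qc n d ψ S := by
  unfold Qc
  refine Finset.sum_congr rfl fun x _ => Finset.sum_congr rfl fun y _ => ?_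
  simp only [Finset.mem_compl, ite_not]
  ring

lemma key {ω : Fin n → ℂ} (hω : ∀ i, IsPrimitiveRoot (ω i) (d i))
    (ψ : (∀ i, ZMod (d i)) → ℂ) (S : Finset (Fin n)) :
    ∑ a ∈ Finset.univ.filter (fun a : ∀ i, ZMod (d i) × ZMod (d i) => ∀ i ∉ S, a i = 0),
        corrN n d ω (Matrix.vecMulVec ψ (star ψ)) a *
          conj (corrN n d ω (Matrix.vecMulVec ψ (star ψ)) a) =
      (∏ i ∈ S, (d i : ℂ)) * Qc n d ψ S := by
  have step1 : ∀ a : ∀ i, ZMod (d i) × ZMod (d i),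
      corrN n d ω (Matrix.vecMulVec ψ (star ψ)) a *
        conj (corrN n d ω (Matrix.vecMulVec ψ (star ψ)) a) =
      ∑ x, ∑ x', (ψ x * conj (ψ (fun i => x i + (a i).2)) *
          (conj (ψ x') * ψ (fun i => x' i + (a i).2))) *
        (conj (∏ i, (ω i) ^ ((a i).1 * x i).val) * ∏ i, (ω i) ^ ((a i).1 * x' i).val) := by
    intro a
    rw [corr_eq, map_sum, Finset.sum_mul_sum]
    refine Finset.sum_congr rfl fun x _ => Finset.sum_congr rfl fun x' _ => ?_
    simp only [_root_.map_mul, Complex.conj_conj]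
    ring
  simp only [step1]
  rw [sum_pair_split]
  simp only []
  trans (∑ q ∈ Finset.univ.filter (fun q : ∀ i, ZMod (d i) => ∀ i ∉ S, q i = 0),
      ∑ x, ∑ x', (ψ x * conj (ψ (fun i => x i + q i)) *
          (conj (ψ x') * ψ (fun i => x' i + q i))) *
        (if ∀ i ∈ S, x i = x' i then (∏ i ∈ S, (d i : ℂ)) else 0))
  · refine Finset.sum_congr rfl fun q _ => ?_
    rw [Finset.sum_comm]
    refine Finset.sum_congr rfl fun x _ => ?_
    rw [Finset.sum_comm]
    refine Finset.sum_congr rfl fun x' _ => ?_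
    rw [← Finset.mul_sum, ← orthS hω S x x']
    congr 1
    refine Finset.sum_congr rfl fun p _ => ?_
    rw [map_prod, Finset.prod_mul_distrib]
  · trans (∑ x, ∑ q ∈ Finset.univ.filter (fun q : ∀ i, ZMod (d i) => ∀ i ∉ S, q i = 0),
        ∑ x' ∈ Finset.univ.filter (fun x' : ∀ i, ZMod (d i) => ∀ i ∈ S, x i = x' i),
          (ψ x * conj (ψ (fun i => x i + q i)) *
            (conj (ψ x') * ψ (fun i => x' i + q i))) * (∏ i ∈ S, (d i : ℂ)))
    · rw [Finset.sum_comm]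
      refine Finset.sum_congr rfl fun x _ => Finset.sum_congr rfl fun q _ => ?_
      rw [Finset.sum_filter]
      refine Finset.sum_congr rfl fun x' _ => ?_
      rw [mul_ite, mul_zero]
    · rw [Qc, Finset.mul_sum]
      refine Finset.sum_congr rfl fun x _ => ?_
      rw [sum_mix S x]
      rw [Finset.mul_sum]
      refine Finset.sum_congr rfl fun y _ => ?_
      have h1 : (fun i => x i + (if i ∈ S then y i - x i else 0)) =
          (fun i => if i ∈ S then y i else x i) := by
        funext i; by_cases hi : i ∈ S <;> simp [hi]
      have h2 : (fun i => (if i ∈ S then x i else y i) + (if i ∈ S then y i - x i else 0)) =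
          y := by
        funext i; by_cases hi : i ∈ S <;> simp [hi]
      rw [h1, h2]
      ring
end aux2

section final
variable {n : ℕ} {d : Fin n → ℕ} [∀ i, NeZero (d i)]

lemma norm_sq_cast (z : ℂ) : ((‖z‖ ^ 2 : ℝ) : ℂ) = z * conj z := by
  rw [Complex.mul_conj, ← Complex.sq_norm]

lemma norm_sq_cast' (z : ℂ) : (‖z‖ : ℂ) ^ 2 = z * conj z := by
  rw [← norm_sq_cast]; push_cast; ring

lemma cast_sum_norm {A : Type*} (F : Finset A) (c : A → ℂ) :
    ((∑ a ∈ F, ‖c a‖ ^ 2 : ℝ) : ℂ) = ∑ a ∈ F, c a * conj (c a) := by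
  push_cast
  exact Finset.sum_congr rfl fun a _ => by rw [← norm_sq_cast]; push_cast; ring

lemma corr_zero {ω : Fin n → ℂ} (ψ : (∀ i, ZMod (d i)) → ℂ)
    (hψ : ∑ v, ‖ψ v‖ ^ 2 = 1) :
    corrN n d ω (Matrix.vecMulVec ψ (star ψ)) 0 = 1 := by
  rw [corr_eq]
  have h1 : ∀ x : ∀ i, ZMod (d i),
      (fun i => x i + ((0 : ∀ i, ZMod (d i) × ZMod (d i)) i).2) = x := by
    intro x; funext i; simp
  have h2 : ∀ x : ∀ i, ZMod (d i),
      (∏ i, (ω i) ^ (((0 : ∀ i, ZMod (d i) × ZMod (d i)) i).1 * x i).val) = 1 := by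
    intro x
    refine Finset.prod_eq_one fun i _ => ?_
    simp
  calc ∑ x, ψ x * conj (ψ (fun i => x i + ((0 : ∀ i, ZMod (d i) × ZMod (d i)) i).2)) *
        conj (∏ i, (ω i) ^ (((0 : ∀ i, ZMod (d i) × ZMod (d i)) i).1 * x i).val)
      = ∑ x, ψ x * conj (ψ x) := by
        refine Finset.sum_congr rfl fun x _ => ?_
        rw [h1, h2]; simp
    _ = ((∑ v, ‖ψ v‖ ^ 2 : ℝ) : ℂ) := (cast_sum_norm _ _).symm
    _ = 1 := by rw [hψ]; norm_num

lemma filter_singleton_split (l : Fin n) :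
    (Finset.univ.filter
        (fun a : ∀ i, ZMod (d i) × ZMod (d i) => ∀ i ∉ ({l} : Finset (Fin n)), a i = 0)) =
      insert 0 (Finset.univ.filter
        (fun a : ∀ i, ZMod (d i) × ZMod (d i) => a l ≠ 0 ∧ ∀ i, i ≠ l → a i = 0)) := by
  ext a
  simp only [Finset.mem_filter, Finset.mem_univ, true_and, Finset.mem_insert,
    Finset.mem_singleton]
  constructor
  · intro h
    by_cases hal : a l = 0
    · left; funext i
      by_cases hi : i = l
      · subst hi; exact hal
      · exact h i hi
    · right; exact ⟨hal, fun i hi => h i hi⟩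
  · rintro (rfl | ⟨-, h⟩) i hi
    · rfl
    · exact h i hi

lemma filter_compl_split (l : Fin n) :
    (Finset.univ.filter
        (fun a : ∀ i, ZMod (d i) × ZMod (d i) => ∀ i ∉ (({l} : Finset (Fin n))ᶜ), a i = 0)) =
      insert 0 (Finset.univ.filter
        (fun a : ∀ i, ZMod (d i) × ZMod (d i) => a l = 0 ∧ a ≠ 0)) := by
  ext a
  simp only [Finset.mem_filter, Finset.mem_univ, true_and, Finset.mem_insert,
    Finset.mem_compl, Finset.mem_singleton, not_not]
  constructor
  · intro h
    by_cases h0 : a = 0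
    · left; exact h0
    · right; exact ⟨h l rfl, h0⟩
  · rintro (rfl | ⟨h, -⟩) i hi
    · rfl
    · rw [hi]; exact h

lemma zero_not_mem_1 (l : Fin n) :
    (0 : ∀ i, ZMod (d i) × ZMod (d i)) ∉ Finset.univ.filter
      (fun a : ∀ i, ZMod (d i) × ZMod (d i) => a l ≠ 0 ∧ ∀ i, i ≠ l → a i = 0) := by
  simp

lemma zero_not_mem_2 (l : Fin n) :
    (0 : ∀ i, ZMod (d i) × ZMod (d i)) ∉ Finset.univ.filter
      (fun a : ∀ i, ZMod (d i) × ZMod (d i) => a l = 0 ∧ a ≠ 0) := by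
  simp

end final

/-- `Asum s = ∑_{i₁<⋯<iₛ} ‖T^{(i₁⋯iₛ)}‖²`, the total squared norm of all
`s`-body correlation tensors: the sum of `|corr|²` over Weyl multi-indices with
exactly `s` nonidentity components. -/
noncomputable def Asum (n : ℕ) (d : Fin n → ℕ) [∀ i, NeZero (d i)] (ω : Fin n → ℂ)
    (ρ : Matrix (∀ i, ZMod (d i)) (∀ i, ZMod (d i)) ℂ) (s : ℕ) : ℝ :=
  ∑ a ∈ Finset.univ.filter
      (fun a : ∀ i, ZMod (d i) × ZMod (d i) =>
        (Finset.univ.filter fun i => a i ≠ 0).card = s),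
    ‖corrN n d ω ρ a‖ ^ 2

lemma comb {n : ℕ} (hn : 0 < n) {d : Fin n → ℕ} [∀ i, NeZero (d i)]
    (w : (∀ i, ZMod (d i) × ZMod (d i)) → ℝ) :
    ∑ l : Fin n, ∑ a ∈ Finset.univ.filter
        (fun a : ∀ i, ZMod (d i) × ZMod (d i) => a l = 0 ∧ a ≠ 0), w a =
      ∑ s ∈ Finset.Icc 1 (n - 1), ((n : ℝ) - s) *
        ∑ a ∈ Finset.univ.filter
          (fun a : ∀ i, ZMod (d i) × ZMod (d i) =>
            (Finset.univ.filter fun i => a i ≠ 0).card = s), w a := by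
  have hk_le : ∀ a : ∀ i, ZMod (d i) × ZMod (d i),
      (Finset.univ.filter fun i => a i ≠ 0).card ≤ n := fun a =>
    le_trans (Finset.card_filter_le _ _) (by simp)
  -- Step A
  have stepA : ∑ l : Fin n, ∑ a ∈ Finset.univ.filter
        (fun a : ∀ i, ZMod (d i) × ZMod (d i) => a l = 0 ∧ a ≠ 0), w a =
      ∑ a ∈ Finset.univ.filter (fun a : ∀ i, ZMod (d i) × ZMod (d i) => a ≠ 0),
        ((n : ℝ) - (Finset.univ.filter fun i => a i ≠ 0).card) * w a := by
    simp only [Finset.sum_filter]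
    rw [Finset.sum_comm]
    refine Finset.sum_congr rfl fun a _ => ?_
    by_cases h0 : a = 0
    · simp [h0]
    · simp only [h0, ne_eq, not_false_eq_true, and_true, if_true]
      have hcard : (Finset.univ.filter fun l => a l = 0).card =
          n - (Finset.univ.filter fun i => a i ≠ 0).card := by
        have hcompl : (Finset.univ.filter fun l => a l = 0) =
            (Finset.univ.filter fun i => a i ≠ 0)ᶜ := by
          ext i; simp
        rw [hcompl, Finset.card_compl, Fintype.card_fin]
      calc (∑ l : Fin n, if a l = 0 then w a else 0)
          = ∑ l ∈ Finset.univ.filter (fun l => a l = 0), w a := by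
            rw [Finset.sum_filter]
        _ = ((Finset.univ.filter fun l => a l = 0).card : ℝ) * w a := by
            rw [Finset.sum_const, nsmul_eq_mul]
        _ = ((n : ℝ) - (Finset.univ.filter fun i => a i ≠ 0).card) * w a := by
            rw [hcard, Nat.cast_sub (hk_le a)]
  rw [stepA]
  -- Step B : fiberwise
  have hmaps : ∀ a ∈ Finset.univ.filter (fun a : ∀ i, ZMod (d i) × ZMod (d i) => a ≠ 0),
      (Finset.univ.filter fun i => a i ≠ 0).card ∈ Finset.Icc 1 n := by
    intro a ha
    simp only [Finset.mem_filter, Finset.mem_univ, true_and] at ha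
    rw [Finset.mem_Icc]
    refine ⟨?_, hk_le a⟩
    rw [Nat.one_le_iff_ne_zero]
    intro hc
    apply ha
    funext i
    rw [Finset.card_eq_zero, Finset.filter_eq_empty_iff] at hc
    have := hc (Finset.mem_univ i)
    simpa using this
  rw [← Finset.sum_fiberwise_of_maps_to hmaps
    (fun a => ((n : ℝ) - (Finset.univ.filter fun i => a i ≠ 0).card) * w a)]
  -- Step C+D
  have stepC : ∀ s ∈ Finset.Icc 1 n,
      ∑ a ∈ (Finset.univ.filter
          (fun a : ∀ i, ZMod (d i) × ZMod (d i) => a ≠ 0)).filter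
          (fun a => (Finset.univ.filter fun i => a i ≠ 0).card = s),
        ((n : ℝ) - (Finset.univ.filter fun i => a i ≠ 0).card) * w a =
      ((n : ℝ) - s) * ∑ a ∈ Finset.univ.filter
          (fun a : ∀ i, ZMod (d i) × ZMod (d i) =>
            (Finset.univ.filter fun i => a i ≠ 0).card = s), w a := by
    intro s hs
    rw [Finset.mem_Icc] at hs
    have hset : (Finset.univ.filter
          (fun a : ∀ i, ZMod (d i) × ZMod (d i) => a ≠ 0)).filter
          (fun a => (Finset.univ.filter fun i => a i ≠ 0).card = s) =
        Finset.univ.filter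
          (fun a : ∀ i, ZMod (d i) × ZMod (d i) =>
            (Finset.univ.filter fun i => a i ≠ 0).card = s) := by
      ext a
      simp only [Finset.mem_filter, Finset.mem_univ, true_and, and_iff_right_iff_imp]
      intro hks h0
      subst h0
      have hemp : (Finset.univ.filter
          fun i => (0 : ∀ i, ZMod (d i) × ZMod (d i)) i ≠ 0) = ∅ :=
        Finset.filter_eq_empty_iff.mpr (fun i _ => by simp)
      rw [hemp] at hks
      simp at hks
      omega
    rw [hset, Finset.mul_sum]
    refine Finset.sum_congr rfl fun a ha => ?_
    simp only [Finset.mem_filter] at ha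
    rw [ha.2]
  rw [Finset.sum_congr rfl stepC]
  have hIcc : Finset.Icc 1 n = Finset.Icc 1 ((n - 1) + 1) := by congr 1; omega
  rw [hIcc, Finset.sum_Icc_succ_top (by omega)]
  rw [show n - 1 + 1 = n from by omega]
  simp

/-- For a pure `n`-partite state (`n > 2`): the single-party-vs-rest purity
identities `(1/d_l)(1 + ‖T^{(l)}‖²) = (d_l/D)(1 + ∑_{∅≠J⊆{l}ᶜ} ‖T^{(J)}‖²)`,
and their sum `∑_l (1/d_l²)(1 + ‖T^{(l)}‖²) = (1/D)(n + ∑_{s=1}^{n−1}(n−s)Aₛ)`. -/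
theorem pure_single_vs_rest_purity (n : ℕ) (hn : 2 < n) (d : Fin n → ℕ)
    [∀ i, NeZero (d i)] (ω : Fin n → ℂ) (hω : ∀ i, IsPrimitiveRoot (ω i) (d i))
    (ψ : (∀ i, ZMod (d i)) → ℂ) (hψ : ∑ v, ‖ψ v‖ ^ 2 = 1)
    (ρ : Matrix (∀ i, ZMod (d i)) (∀ i, ZMod (d i)) ℂ)
    (hρ : ρ = Matrix.vecMulVec ψ (star ψ)) :
    (∀ l : Fin n,
      (1 / (d l : ℝ)) * (1 +
          ∑ a ∈ Finset.univ.filter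
              (fun a : ∀ i, ZMod (d i) × ZMod (d i) =>
                a l ≠ 0 ∧ ∀ i, i ≠ l → a i = 0),
            ‖corrN n d ω ρ a‖ ^ 2) =
      ((d l : ℝ) / ∏ i, (d i : ℝ)) * (1 +
          ∑ a ∈ Finset.univ.filter
              (fun a : ∀ i, ZMod (d i) × ZMod (d i) => a l = 0 ∧ a ≠ 0),
            ‖corrN n d ω ρ a‖ ^ 2)) ∧
    (∑ l : Fin n,
        (1 / (d l : ℝ) ^ 2) * (1 +
          ∑ a ∈ Finset.univ.filter
              (fun a : ∀ i, ZMod (d i) × ZMod (d i) =>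
                a l ≠ 0 ∧ ∀ i, i ≠ l → a i = 0),
            ‖corrN n d ω ρ a‖ ^ 2) =
      (1 / ∏ i, (d i : ℝ)) *
        ((n : ℝ) + ∑ s ∈ Finset.Icc 1 (n - 1), ((n : ℝ) - s) * Asum n d ω ρ s)) := by
  subst hρ
  have hc0 := corr_zero (ω := ω) ψ hψ
  have hd : ∀ i, 0 < (d i : ℝ) := fun i => by
    exact_mod_cast Nat.pos_of_ne_zero (NeZero.ne (d i))
  have hD : 0 < ∏ i, (d i : ℝ) := Finset.prod_pos fun i _ => hd i
  -- real-form key identity for each l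
  have main : ∀ l : Fin n,
      (∏ i ∈ ({l}ᶜ : Finset (Fin n)), (d i : ℝ)) * (1 +
          ∑ a ∈ Finset.univ.filter
              (fun a : ∀ i, ZMod (d i) × ZMod (d i) =>
                a l ≠ 0 ∧ ∀ i, i ≠ l → a i = 0),
            ‖corrN n d ω (Matrix.vecMulVec ψ (star ψ)) a‖ ^ 2) =
      (d l : ℝ) * (1 +
          ∑ a ∈ Finset.univ.filter
              (fun a : ∀ i, ZMod (d i) × ZMod (d i) => a l = 0 ∧ a ≠ 0),
            ‖corrN n d ω (Matrix.vecMulVec ψ (star ψ)) a‖ ^ 2) := by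
    intro l
    have hk1 := key hω ψ ({l} : Finset (Fin n))
    have hk2 := key hω ψ (({l} : Finset (Fin n))ᶜ)
    rw [filter_singleton_split l, Finset.sum_insert (zero_not_mem_1 l), hc0,
      Finset.prod_singleton] at hk1
    rw [filter_compl_split l, Finset.sum_insert (zero_not_mem_2 l), hc0,
      Qc_compl] at hk2
    simp only [_root_.map_one, mul_one] at hk1 hk2
    rw [← Complex.ofReal_inj]
    push_cast [norm_sq_cast']
    rw [hk1, hk2]
    ring
  constructor
  · intro l
    have h := main l
    have hDsplit : (∏ i, (d i : ℝ)) = (d l : ℝ) * ∏ i ∈ ({l}ᶜ : Finset (Fin n)), (d i : ℝ) := by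
      rw [← Finset.prod_mul_prod_compl ({l} : Finset (Fin n)), Finset.prod_singleton]
    have hP : 0 < ∏ i ∈ ({l}ᶜ : Finset (Fin n)), (d i : ℝ) :=
      Finset.prod_pos fun i _ => hd i
    rw [hDsplit, div_mul_eq_div_div, div_self (hd l).ne', one_div, one_div,
      inv_mul_eq_div, inv_mul_eq_div, div_eq_div_iff (hd l).ne' hP.ne']
    linear_combination h
  · have hterm : ∀ l : Fin n,
        (1 / (d l : ℝ) ^ 2) * (1 +
          ∑ a ∈ Finset.univ.filter
              (fun a : ∀ i, ZMod (d i) × ZMod (d i) =>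
                a l ≠ 0 ∧ ∀ i, i ≠ l → a i = 0),
            ‖corrN n d ω (Matrix.vecMulVec ψ (star ψ)) a‖ ^ 2) =
        (1 / ∏ i, (d i : ℝ)) * (1 +
          ∑ a ∈ Finset.univ.filter
              (fun a : ∀ i, ZMod (d i) × ZMod (d i) => a l = 0 ∧ a ≠ 0),
            ‖corrN n d ω (Matrix.vecMulVec ψ (star ψ)) a‖ ^ 2) := by
      intro l
      have h := main l
      have hDsplit : (∏ i, (d i : ℝ)) =
          (d l : ℝ) * ∏ i ∈ ({l}ᶜ : Finset (Fin n)), (d i : ℝ) := by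
        rw [← Finset.prod_mul_prod_compl ({l} : Finset (Fin n)), Finset.prod_singleton]
      have hP : 0 < ∏ i ∈ ({l}ᶜ : Finset (Fin n)), (d i : ℝ) :=
        Finset.prod_pos fun i _ => hd i
      rw [hDsplit, one_div, one_div, inv_mul_eq_div, inv_mul_eq_div,
        div_eq_div_iff (pow_pos (hd l) 2).ne' (mul_pos (hd l) hP).ne']
      linear_combination (d l : ℝ) * h
    trans (∑ l : Fin n, (1 / ∏ i, (d i : ℝ)) * (1 +
        ∑ a ∈ Finset.univ.filter
            (fun a : ∀ i, ZMod (d i) × ZMod (d i) => a l = 0 ∧ a ≠ 0),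
          ‖corrN n d ω (Matrix.vecMulVec ψ (star ψ)) a‖ ^ 2))
    · exact Finset.sum_congr rfl fun l _ => hterm l
    · rw [← Finset.mul_sum]
      congr 1
      rw [Finset.sum_add_distrib, Finset.sum_const, Finset.card_univ, Fintype.card_fin,
        nsmul_eq_mul, mul_one]
      congr 1
      simp only [Asum]
      exact comb (by omega) _
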